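/- The set of records of the walk S_n(2√2) is exactly the set of half even-indexed Pell numbers {P_{2n}/2 : n ≥ 0}. -/

import Mathlib

/-!
Write `N_k = P_{2k}/2`, `Q_k = P_{2k+1}` (so `N_{k+1} = N_k + Q_k`), `H_n` for the companion
sequence with `H_n + P_n √2 = (1 + √2)^n`, and `δ = √2 - 1`. Then `N_k · 2√2 = H_{2k} - δ^{2k}` with
`H_{2k}` odd, so `⌊N_k · 2√2⌋` is even. For `0 < m < Q_k` the fractional part of `m · 2√2` is at
least `δ^{2k}`: otherwise `8m² - ⌊m · 2√2⌋²` would be a positive integer below 7, forcing a solution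
of `q² + 1 = 2m²`, i.e. `m = P_j` with `j ≤ 2k` and fractional part `2δ^j`. Hence the step at
`N_k + m` is the opposite of the step at `m`, i.e. `S(N_k + m) = S(N_k) - S(m)` for `m < Q_k`.
Applying this twice gives `S(2N_k + m) = S(m)`, whence `S(Q_k - 1) = 0`, `S(N_k) = k`, and by
strong induction `0 ≤ S(n) < k` for `n < N_k`. Since the walk moves by `±1`, the records are
exactly the `N_k`.
-/

/-- The deterministic random walk `S_n(ξ) = ∑_{j=1}^n (-1)^⌊j·ξ⌋`. -/
noncomputable def S (ξ : ℝ) (n : ℕ) : ℤ :=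
  ∑ j ∈ Finset.Icc 1 n, ((Int.negOnePow ⌊(j : ℝ) * ξ⌋ : ℤˣ) : ℤ)

/-- An index `r` is a record of the walk `S_n(ξ)` if no earlier partial sum equals `S_r(ξ)`. -/
def IsRecord (ξ : ℝ) (r : ℕ) : Prop :=
  ∀ m < r, S ξ m ≠ S ξ r

/-- The Pell numbers: `P 0 = 0`, `P 1 = 1`, `P (n+2) = 2·P (n+1) + P n`. -/
def pell : ℕ → ℕ
  | 0 => 0
  | 1 => 1
  | n + 2 => 2 * pell (n + 1) + pell n

-- Half the Pell–Lucas numbers.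
def companionPell : ℕ → ℕ
  | 0 => 1
  | n + 1 => companionPell n + 2 * pell n

theorem companionPell_succ (n : ℕ) : companionPell (n + 1) = companionPell n + 2 * pell n := rfl

theorem pell_add_two (n : ℕ) : pell (n + 2) = 2 * pell (n + 1) + pell n := rfl

theorem pell_succ (n : ℕ) : pell (n + 1) = companionPell n + pell n := by
  induction n with
  | zero => rfl
  | succ n ih => rw [pell_add_two, companionPell_succ]; omega

theorem odd_companionPell (n : ℕ) : Odd (companionPell n) := by
  induction n with
  | zero => exact odd_one
  | succ n ih => rw [companionPell_succ]; exact ih.add_even (even_two_mul _)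

theorem pell_pos {n : ℕ} (hn : n ≠ 0) : 0 < pell n := by
  obtain ⟨n, rfl⟩ := Nat.exists_eq_succ_of_ne_zero hn
  rw [pell_succ]
  have := (odd_companionPell n).pos
  omega

theorem pell_monotone : Monotone pell :=
  monotone_nat_of_le_succ fun n => by rw [pell_succ]; omega

theorem companionPell_add_pell_mul {R : Type*} [CommRing R] {x : R} (hx : x ^ 2 = 2) (n : ℕ) :
    (companionPell n : R) + pell n * x = (1 + x) ^ n := by
  induction n with
  | zero => simp [companionPell, pell]
  | succ n ih =>
    rw [pell_succ, companionPell_succ, pow_succ, ← ih]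
    push_cast
    linear_combination -(pell n : R) * hx

theorem pell_mul_sqrt_two (n : ℕ) :
    (pell n : ℝ) * √2 = companionPell n - (1 - √2) ^ n := by
  have h := companionPell_add_pell_mul (x := -√2) (by simp) n
  rw [← sub_eq_add_neg] at h
  linarith

theorem two_mul_pell_mul_sqrt_two (n : ℕ) :
    2 * (pell n : ℝ) * √2 = (1 + √2) ^ n - (1 - √2) ^ n := by
  have h := companionPell_add_pell_mul (x := √2) (by simp) n
  linarith [pell_mul_sqrt_two n]

-- Descent: dividing `q + m√2` by the unit `1 + √2` gives `(2m - q) + (q - m)√2`, of opposite norm.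
theorem exists_eq_companionPell_of_natAbs_eq_one {q m : ℕ}
    (h : ((q : ℤ) ^ 2 - 2 * m ^ 2).natAbs = 1) :
    ∃ n, q = companionPell n ∧ m = pell n := by
  induction m using Nat.strong_induction_on generalizing q with
  | _ m ih =>
    have hnorm : (q : ℤ) ^ 2 - 2 * m ^ 2 = 1 ∨ (q : ℤ) ^ 2 - 2 * m ^ 2 = -1 := by
      have := Int.natAbs_eq ((q : ℤ) ^ 2 - 2 * m ^ 2)
      rwa [h, Nat.cast_one] at this
    rcases Nat.eq_zero_or_pos m with rfl | hm
    · refine ⟨0, ?_, rfl⟩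
      have : (q : ℤ) ^ 2 = 1 := by
        rcases hnorm with h | h <;> push_cast at h <;> nlinarith [sq_nonneg (q : ℤ)]
      simpa [companionPell] using this
    have hmq : m ≤ q := by rcases hnorm with h | h <;> nlinarith
    have hq2m : q < 2 * m := by rcases hnorm with h | h <;> nlinarith
    obtain ⟨n, hq, hm⟩ := ih (q - m) (by omega) (q := 2 * m - q) (by
      push_cast [hmq, hq2m.le]
      rw [show (2 * m - q : ℤ) ^ 2 - 2 * (q - m) ^ 2 = -((q : ℤ) ^ 2 - 2 * m ^ 2) by ring,
        Int.natAbs_neg, h])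
    exact ⟨n + 1, by rw [companionPell_succ]; omega, by rw [pell_succ]; omega⟩

theorem sqrt_two_sub_one_pow_mul_two_mul_pell_mul_sqrt_two (k : ℕ) :
    (√2 - 1) ^ (2 * k) * (2 * pell (2 * k + 1) * √2) = √2 + 1 + (√2 - 1) ^ (4 * k + 1) := by
  have hunit : (√2 - 1) * (1 + √2) = 1 := by
    linear_combination Real.mul_self_sqrt (zero_le_two : (0 : ℝ) ≤ 2)
  rw [two_mul_pell_mul_sqrt_two, show 1 - √2 = -(√2 - 1) by ring, Odd.neg_pow ⟨k, rfl⟩,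
    sub_neg_eq_add, mul_add, pow_succ (1 + √2), ← mul_assoc, ← mul_pow, hunit, one_pow, one_mul,
    ← pow_add, show 2 * k + (2 * k + 1) = 4 * k + 1 by ring, add_comm 1 √2]

theorem exists_eq_two_mul_of_pos_of_lt_seven {m p : ℤ} (h0 : 0 < 8 * m ^ 2 - p ^ 2)
    (h7 : 8 * m ^ 2 - p ^ 2 < 7) : ∃ q, p = 2 * q ∧ q ^ 2 + 1 = 2 * m ^ 2 := by
  rcases Int.even_or_odd' p with ⟨q, rfl | rfl⟩
  · refine ⟨q, rfl, ?_⟩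
    rw [show (2 * q) ^ 2 = 4 * q ^ 2 by ring] at h0 h7
    omega
  · obtain ⟨u, hu⟩ := Int.even_mul_succ_self q
    rw [show (2 * q + 1) ^ 2 = 8 * u + 1 by linear_combination 4 * hu] at h0 h7
    exfalso
    omega

theorem sqrt_two_sub_one_pow_le_fract {k m : ℕ} (hm0 : m ≠ 0) (hm : m < pell (2 * k + 1)) :
    (√2 - 1) ^ (2 * k) ≤ Int.fract (m * (2 * √2)) := by
  by_contra! hlt
  set x : ℝ := m * (2 * √2) with hx
  have hδ : 0 < √2 - 1 := by linarith [Real.one_lt_sqrt_two]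
  have hirr : Irrational x := by
    simpa [hx, mul_assoc, mul_left_comm] using
      irrational_sqrt_two.natCast_mul (show 2 * m ≠ 0 by omega)
  have hfract : 0 < Int.fract x := Int.fract_pos.2 (hirr.ne_int _)
  have hfloor : 0 ≤ ⌊x⌋ := Int.floor_nonneg.2 (by positivity)
  have hfloor' : (0 : ℝ) ≤ ⌊x⌋ := by exact_mod_cast hfloor
  have hd : ((8 * m ^ 2 - ⌊x⌋ ^ 2 : ℤ) : ℝ) = Int.fract x * (x + ⌊x⌋) := by
    rw [← Int.self_sub_floor]
    push_cast
    linear_combination (-4 * (m : ℝ) ^ 2) * Real.sq_sqrt (zero_le_two : (0 : ℝ) ≤ 2)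
  have hd0 : 0 < 8 * (m : ℤ) ^ 2 - ⌊x⌋ ^ 2 := by
    have : 0 < Int.fract x * (x + ⌊x⌋) := by positivity
    exact_mod_cast hd ▸ this
  have hd7 : 8 * (m : ℤ) ^ 2 - ⌊x⌋ ^ 2 < 7 := by
    have hxQ : x ≤ 2 * pell (2 * k + 1) * √2 := by
      rw [hx]
      have : (m : ℝ) ≤ pell (2 * k + 1) := by exact_mod_cast hm.le
      nlinarith [Real.sqrt_nonneg 2]
    have hsmall : (√2 - 1) ^ (4 * k + 1) < 1 :=
      pow_lt_one₀ hδ.le (by linarith [Real.sqrt_two_lt_three_halves]) (by omega)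
    have : Int.fract x * (x + ⌊x⌋) < 7 :=
      calc Int.fract x * (x + ⌊x⌋)
          < (√2 - 1) ^ (2 * k) * (2 * x) := by
            have := Int.self_sub_floor x
            gcongr
            linarith
        _ ≤ 2 * ((√2 - 1) ^ (2 * k) * (2 * pell (2 * k + 1) * √2)) := by
            have := pow_pos hδ (2 * k)
            nlinarith
        _ < 7 := by
            rw [sqrt_two_sub_one_pow_mul_two_mul_pell_mul_sqrt_two]
            linarith [Real.sqrt_two_lt_three_halves]
    exact_mod_cast hd ▸ this
  obtain ⟨q, hpq, hq⟩ := exists_eq_two_mul_of_pos_of_lt_seven hd0 hd7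
  lift q to ℕ using (by omega)
  obtain ⟨n, rfl, rfl⟩ := exists_eq_companionPell_of_natAbs_eq_one (q := q) (m := m) (by
    rw [show (q : ℤ) ^ 2 - 2 * m ^ 2 = -1 by linarith]
    rfl)
  have hn : n ≤ 2 * k := Nat.lt_succ_iff.1 (pell_monotone.reflect_lt hm)
  have hfract_eq : Int.fract x = 2 * (√2 - 1) ^ n := by
    have h : Int.fract x = -2 * (1 - √2) ^ n := by
      rw [← Int.self_sub_floor, hpq, hx]
      push_cast
      linarith [pell_mul_sqrt_two n]
    rw [← abs_of_pos hfract, h, abs_mul, abs_neg, abs_two, abs_pow, abs_sub_comm, abs_of_pos hδ]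
  have : (√2 - 1) ^ (2 * k) ≤ (√2 - 1) ^ n :=
    pow_le_pow_of_le_one hδ.le (by linarith [Real.sqrt_two_lt_three_halves]) hn
  linarith [pow_pos hδ n]

theorem S_zero (ξ : ℝ) : S ξ 0 = 0 := by simp [S]

theorem S_succ (ξ : ℝ) (n : ℕ) :
    S ξ (n + 1) = S ξ n + ((Int.negOnePow ⌊((n + 1 : ℕ) : ℝ) * ξ⌋ : ℤˣ) : ℤ) := by
  rw [S, S, Finset.sum_Icc_succ_top (by omega)]

-- The walk moves by `±1`, so it cannot jump over a value.
theorem exists_S_eq_of_nonneg_of_le (ξ : ℝ) {c : ℤ} (hc : 0 ≤ c) {n : ℕ} (hn : c ≤ S ξ n) :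
    ∃ m ≤ n, S ξ m = c := by
  induction n with
  | zero => exact ⟨0, le_rfl, by rw [S_zero] at hn ⊢; omega⟩
  | succ n ih =>
    by_cases hle : c ≤ S ξ n
    · obtain ⟨m, hm, hSm⟩ := ih hle
      exact ⟨m, by omega, hSm⟩
    · refine ⟨n + 1, le_rfl, ?_⟩
      rw [S_succ] at hn ⊢
      rcases Int.units_eq_one_or (Int.negOnePow ⌊((n + 1 : ℕ) : ℝ) * ξ⌋) with h | h <;>
        simp only [h, Units.val_one, Units.val_neg] at hn ⊢ <;> omega

-- `pell (2 * k) / 2`, built from `pell (2 * k + 2) = 2 * pell (2 * k + 1) + pell (2 * k)`.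
def halfEvenPell : ℕ → ℕ
  | 0 => 0
  | k + 1 => halfEvenPell k + pell (2 * k + 1)

theorem halfEvenPell_succ (k : ℕ) : halfEvenPell (k + 1) = halfEvenPell k + pell (2 * k + 1) :=
  rfl

theorem two_mul_halfEvenPell (k : ℕ) : 2 * halfEvenPell k = pell (2 * k) := by
  induction k with
  | zero => rfl
  | succ k ih =>
    rw [halfEvenPell_succ, show 2 * (k + 1) = 2 * k + 2 by ring, pell_add_two]
    omega

theorem halfEvenPell_strictMono : StrictMono halfEvenPell :=
  strictMono_nat_of_lt_succ fun k => by
    rw [halfEvenPell_succ]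
    have := pell_pos (n := 2 * k + 1) (by omega)
    omega

theorem exists_halfEvenPell_le_lt (n : ℕ) :
    ∃ k, halfEvenPell k ≤ n ∧ n < halfEvenPell (k + 1) := by
  induction n with
  | zero => exact ⟨0, le_rfl, halfEvenPell_strictMono (Nat.zero_lt_one)⟩
  | succ n ih =>
    obtain ⟨k, hk, hnk⟩ := ih
    by_cases h : n + 1 < halfEvenPell (k + 1)
    · exact ⟨k, by omega, h⟩
    · have := halfEvenPell_strictMono (show k + 1 < k + 1 + 1 by omega)
      exact ⟨k + 1, by omega, by omega⟩

theorem pell_two_mul_add_three (k : ℕ) :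
    pell (2 * k + 3) = 4 * halfEvenPell (k + 1) + pell (2 * k + 1) := by
  rw [pell_add_two, show 2 * k + 1 + 1 = 2 * (k + 1) by ring, ← two_mul_halfEvenPell]
  ring

theorem halfEvenPell_mul_two_mul_sqrt_two (k : ℕ) :
    (halfEvenPell k : ℝ) * (2 * √2) = companionPell (2 * k) - (√2 - 1) ^ (2 * k) := by
  have h : ((2 * halfEvenPell k : ℕ) : ℝ) = pell (2 * k) := by rw [two_mul_halfEvenPell]
  push_cast at h
  have hpell := pell_mul_sqrt_two (2 * k)
  rw [show 1 - √2 = -(√2 - 1) by ring, (even_two_mul k).neg_pow] at hpell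
  linear_combination √2 * h + hpell

theorem negOnePow_floor_halfEvenPell_mul (k : ℕ) :
    Int.negOnePow ⌊(halfEvenPell k : ℝ) * (2 * √2)⌋ = 1 := by
  have hδ : 0 < √2 - 1 := by linarith [Real.one_lt_sqrt_two]
  have h0 : 0 < (√2 - 1) ^ (2 * k) := pow_pos hδ _
  have h1 : (√2 - 1) ^ (2 * k) ≤ 1 :=
    pow_le_one₀ hδ.le (by linarith [Real.sqrt_two_lt_three_halves])
  have hfloor : ⌊(halfEvenPell k : ℝ) * (2 * √2)⌋ = companionPell (2 * k) - 1 := by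
    rw [Int.floor_eq_iff, halfEvenPell_mul_two_mul_sqrt_two]
    push_cast
    constructor <;> linarith
  obtain ⟨t, ht⟩ := odd_companionPell (2 * k)
  exact Int.negOnePow_even _ ⟨t, by rw [hfloor, ht]; push_cast; ring⟩

theorem negOnePow_floor_halfEvenPell_add_mul {k m : ℕ} (hm0 : m ≠ 0) (hm : m < pell (2 * k + 1)) :
    Int.negOnePow ⌊((halfEvenPell k + m : ℕ) : ℝ) * (2 * √2)⌋ =
      -Int.negOnePow ⌊(m : ℝ) * (2 * √2)⌋ := by
  have hδ : 0 < √2 - 1 := by linarith [Real.one_lt_sqrt_two]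
  have hfract := sqrt_two_sub_one_pow_le_fract hm0 hm
  have hfloor : ⌊((halfEvenPell k + m : ℕ) : ℝ) * (2 * √2)⌋ =
      companionPell (2 * k) + ⌊(m : ℝ) * (2 * √2)⌋ := by
    rw [Int.floor_eq_iff, Nat.cast_add, add_mul, halfEvenPell_mul_two_mul_sqrt_two]
    have := Int.self_sub_floor ((m : ℝ) * (2 * √2))
    have := Int.fract_lt_one ((m : ℝ) * (2 * √2))
    have := pow_pos hδ (2 * k)
    push_cast
    constructor <;> linarith
  rw [hfloor, Int.negOnePow_add, Int.negOnePow_odd _ (by exact_mod_cast odd_companionPell (2 * k)),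
    neg_one_mul]

theorem S_halfEvenPell_add {k m : ℕ} (hm : m < pell (2 * k + 1)) :
    S (2 * √2) (halfEvenPell k + m) = S (2 * √2) (halfEvenPell k) - S (2 * √2) m := by
  induction m with
  | zero => simp [S_zero]
  | succ m ih =>
    rw [← add_assoc, S_succ, S_succ, ih (by omega), add_assoc,
      negOnePow_floor_halfEvenPell_add_mul (by omega) hm]
    push_cast
    ring

theorem S_two_mul_halfEvenPell_add {k m : ℕ} (hm : halfEvenPell k + m < pell (2 * k + 1)) :
    S (2 * √2) (2 * halfEvenPell k + m) = S (2 * √2) m := by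
  rw [two_mul (halfEvenPell k), add_assoc, S_halfEvenPell_add hm, S_halfEvenPell_add (by omega)]
  ring

theorem S_pell_sub_one (k : ℕ) : S (2 * √2) (pell (2 * k + 1) - 1) = 0 := by
  induction k with
  | zero => exact S_zero _
  | succ k ih =>
    have hpos := pell_pos (n := 2 * k + 1) (by omega)
    have hsplit : pell (2 * (k + 1) + 1) - 1 =
        2 * halfEvenPell (k + 1) + (2 * halfEvenPell (k + 1) + (pell (2 * k + 1) - 1)) := by
      rw [show 2 * (k + 1) + 1 = 2 * k + 3 by ring, pell_two_mul_add_three]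
      omega
    have hlt : halfEvenPell (k + 1) + (2 * halfEvenPell (k + 1) + (pell (2 * k + 1) - 1)) <
        pell (2 * (k + 1) + 1) := by
      rw [show 2 * (k + 1) + 1 = 2 * k + 3 by ring, pell_two_mul_add_three]
      omega
    rw [hsplit, S_two_mul_halfEvenPell_add hlt, S_two_mul_halfEvenPell_add (by omega), ih]

theorem S_halfEvenPell (k : ℕ) : S (2 * √2) (halfEvenPell k) = k := by
  induction k with
  | zero => exact S_zero _
  | succ k ih =>
    have hpos := pell_pos (n := 2 * k + 1) (by omega)
    have h := S_succ (2 * √2) (halfEvenPell k + (pell (2 * k + 1) - 1))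
    rw [S_halfEvenPell_add (by omega), S_pell_sub_one, ih,
      show halfEvenPell k + (pell (2 * k + 1) - 1) + 1 = halfEvenPell (k + 1) by
        rw [halfEvenPell_succ]; omega,
      negOnePow_floor_halfEvenPell_mul] at h
    rw [h]
    push_cast
    ring

theorem S_nonneg_and_lt {n k : ℕ} (h : n < halfEvenPell k) :
    0 ≤ S (2 * √2) n ∧ S (2 * √2) n < k := by
  induction n using Nat.strong_induction_on generalizing k with
  | _ n ih =>
    obtain ⟨j, hjn, hnj⟩ := exists_halfEvenPell_le_lt n
    have hjk : j + 1 ≤ k := halfEvenPell_strictMono.lt_iff_lt.1 (hjn.trans_lt h)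
    rcases Nat.eq_zero_or_pos j with rfl | hj
    · obtain rfl : n = 0 := by simpa [halfEvenPell, pell] using hnj
      rw [S_zero]
      omega
    obtain ⟨m, rfl⟩ := Nat.exists_eq_add_of_le hjn
    have hm : m < pell (2 * j + 1) := by rw [halfEvenPell_succ] at hnj; omega
    have hN : 0 < halfEvenPell j := halfEvenPell_strictMono hj
    obtain ⟨hm0, hmj⟩ := ih m (by omega) (k := j + 1) (by omega)
    rw [S_halfEvenPell_add hm, S_halfEvenPell]
    omega

theorem stmt_7 (N : ℕ) :
    IsRecord (2 * Real.sqrt 2) N ↔ ∃ n : ℕ, 2 * N = pell (2 * n) := by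
  constructor
  · intro hrec
    obtain ⟨k, hkN, hNk⟩ := exists_halfEvenPell_le_lt N
    refine ⟨k, ?_⟩
    rw [← two_mul_halfEvenPell]
    by_contra hne
    obtain ⟨hS0, hSk⟩ := S_nonneg_and_lt hNk
    obtain ⟨m, hm, hSm⟩ := exists_S_eq_of_nonneg_of_le _ hS0 (n := halfEvenPell k)
      (by rw [S_halfEvenPell]; omega)
    exact hrec m (by omega) hSm
  · rintro ⟨k, hk⟩ m hm
    obtain rfl : N = halfEvenPell k := by have := two_mul_halfEvenPell k; omega
    rw [S_halfEvenPell]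
    exact (S_nonneg_and_lt hm).2.ne
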